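/- If removing a pending invocation inv(c) from a trace t₁ ++ [inv(c)] ++ t₂ yields a trace (i.e., inv(c) has no matching response or effect), and the partial order <_{P_M} allows the original trace, then <_{P_M} allows the resulting trace t₁ ++ t₂, under the axiom relating enforced orderings of invocations and responses. -/

import Mathlib

/-!
The pending invocation `inv c` is the source of no `R`-edge into `t₁ ++ t₂`: by the axiom such
an edge would also leave `res c`, and since the original trace is allowed, `res c` would occur in
it. Every remaining edge joins two events different from `inv c` (the trace has no duplicates),
and deleting an event other than `a` and `b` keeps `a` before `b`, since `a` precedes `b` in a
trace exactly when `[a, b]` is a sublist of it.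
-/

inductive Event (T PS Op Val : Type) : Type
  | step : T → PS → Event T PS Op Val
  | effS : T → PS → Event T PS Op Val
  | inv  : Op → Val → Event T PS Op Val
  | res  : Op → Val → Event T PS Op Val
  | effO : Op → Val → Event T PS Op Val

namespace Event

variable {T PS Op Val : Type}

/-- `precedes t a b`: `a` occurs at an earlier index than `b` in the trace `t`. -/
def precedes (t : List (Event T PS Op Val)) (a b : Event T PS Op Val) : Prop :=
  ∃ i j, i < j ∧ t[(i : ℕ)]? = some a ∧ t[(j : ℕ)]? = some b

/-- Program events: program steps and their effects. -/
def IsProgEvent : Event T PS Op Val → Prop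
  | step _ _ => True
  | effS _ _ => True
  | _ => False

/-- Invocation or response event. -/
def isIR : Event T PS Op Val → Bool
  | inv _ _ => true
  | res _ _ => true
  | _ => false

/-- Restriction of a trace to its invocation and response events. -/
def restrictIR (t : List (Event T PS Op Val)) : List (Event T PS Op Val) := t.filter isIR

/-- Well-formedness of traces: invocations precede matching responses and effects,
program steps precede their effects, and response/effect outputs agree. -/
def WellFormed (t : List (Event T PS Op Val)) : Prop :=
  (∀ j a out, (t[(j : ℕ)]? = some (res a out) ∨ t[(j : ℕ)]? = some (effO a out)) →
      ∃ i inp, i < j ∧ t[(i : ℕ)]? = some (inv a inp)) ∧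
  (∀ j τ p, t[(j : ℕ)]? = some (effS τ p) → ∃ i, i < j ∧ t[(i : ℕ)]? = some (step τ p)) ∧
  (∀ a outr oute, res a outr ∈ t → effO a oute ∈ t → outr = oute)

/-- `ext t`: the extensions of trace `t` by a sequence of response events. -/
def ext (t : List (Event T PS Op Val)) : Set (List (Event T PS Op Val)) :=
  {u | ∃ tr, u = t ++ tr ∧ (∀ e ∈ tr, ∃ c v, e = res c v) ∧ u.Nodup}

open Classical in
/-- `comp t` removes from `t` every invocation with neither a later response
nor a later operation effect. -/
noncomputable def comp : List (Event T PS Op Val) → List (Event T PS Op Val)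
  | [] => []
  | e :: rest =>
    if ∃ a inp, e = inv a inp ∧ ∀ out, res a out ∉ rest ∧ effO a out ∉ rest
    then comp rest
    else e :: comp rest

/-- `Allows R t` : the (partial) order `R` allows the trace `t`. -/
def Allows (R : Event T PS Op Val → Event T PS Op Val → Prop)
    (t : List (Event T PS Op Val)) : Prop :=
  ∀ a b, R a b → b ∈ t → precedes t a b

/-- The operation order `⪯_t`: pairs `(res c, inv d)` with the response before
the invocation in `t`. -/
def OpOrd (t : List (Event T PS Op Val)) (e e' : Event T PS Op Val) : Prop :=
  (∃ c v, e = res c v) ∧ (∃ d w, e' = inv d w) ∧ precedes t e e'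

/-- Atomic history: every invocation is immediately followed by its response and
every response immediately preceded by its invocation. -/
def Atomic (h : List (Event T PS Op Val)) : Prop :=
  (∀ i a inp, h[(i : ℕ)]? = some (inv a inp) → ∃ out, h[(i + 1 : ℕ)]? = some (res a out)) ∧
  (∀ i a out, h[(i : ℕ)]? = some (res a out) → ∃ j inp, i = j + 1 ∧ h[(j : ℕ)]? = some (inv a inp))

/-- The thread of an object event (invocation or response), if any. -/
def objThread (thread : Op → T) : Event T PS Op Val → Option T
  | inv o _ => some (thread o)
  | res o _ => some (thread o)
  | _ => none

/-- Thread equivalence: equal per-thread subsequences of invocations and responses. -/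
def threadEquiv [DecidableEq T] (thread : Op → T) (t h : List (Event T PS Op Val)) : Prop :=
  ∀ τ : T, t.filter (fun e => decide (objThread thread e = some τ)) =
           h.filter (fun e => decide (objThread thread e = some τ))

open Classical in
/-- The transformation function `trans` of the soundness proof (cases (T1)–(T5)). -/
noncomputable def trans : List (Event T PS Op Val) → List (Event T PS Op Val) →
    List (Event T PS Op Val) → List (Event T PS Op Val)
  | t, h', r =>
    if h5 : ∃ a inp out, h'.head? = some (inv a inp) ∧ inv a inp ∈ r ∧ res a out ∈ t then
      -- (T5)
      let a := h5.choose
      let inp := h5.choose_spec.choose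
      let out := h5.choose_spec.choose_spec.choose
      inv a inp :: effO a out :: res a out ::
        trans t h'.tail.tail (r.eraseP (fun e => decide (e = inv a inp)))
    else
      match t with
      | [] => []
      | .inv a inp :: ts =>
          if h1 : h'.head? = some (inv a inp) ∧ ∃ out, res a out ∈ (inv a inp :: ts) then
            -- (T1)
            inv a inp :: effO a h1.2.choose :: res a h1.2.choose ::
              trans ts h'.tail.tail r
          else
            -- (T2)
            trans ts h' (r ++ [inv a inp])
      | .res _ _ :: ts => trans ts h' r        -- (T3)
      | .effO _ _ :: ts => trans ts h' r       -- (T3)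
      | .step s p :: ts => step s p :: trans ts h' r   -- (T4)
      | .effS s p :: ts => effS s p :: trans ts h' r   -- (T4)
  termination_by t h' r => t.length + h'.length
  decreasing_by
    · obtain ⟨a, inp, out, hh, -, -⟩ := h5
      have hne : h' ≠ [] := by intro hcon; subst hcon; simp at hh
      have h0 : 0 < h'.length := List.length_pos_iff.mpr hne
      simp_wf
      omega
    all_goals simp_wf
    all_goals omega

/-- Atomic-style traces: blocks `[inv a in, eff a out, res a out]` interleaved with
program events, each operation appearing in exactly one block. -/
inductive AtomicStyle : List (Event T PS Op Val) → Prop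
  | nil : AtomicStyle []
  | prog {e : Event T PS Op Val} {t : List (Event T PS Op Val)} :
      IsProgEvent e → AtomicStyle t → AtomicStyle (e :: t)
  | block {a : Op} {inp out : Val} {t : List (Event T PS Op Val)} :
      (∀ v : Val, inv a v ∉ t ∧ res a v ∉ t ∧ effO a v ∉ t) →
      AtomicStyle t →
      AtomicStyle (inv a inp :: effO a out :: res a out :: t)

end Event

namespace List

theorem sublist_append_of_sublist_append_cons {α : Type*} {l l₁ l₂ : List α} {x : α}
    (h : l <+ l₁ ++ x :: l₂) (hx : x ∉ l) : l <+ l₁ ++ l₂ := by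
  obtain ⟨s₁, s₂, rfl, h₁, h₂⟩ := sublist_append_iff.mp h
  refine h₁.append ?_
  rcases sublist_cons_iff.mp h₂ with h₂ | ⟨r, rfl, -⟩
  · exact h₂
  · exact absurd (mem_append_right s₁ mem_cons_self) hx

end List

namespace Event

open List

variable {T PS Op Val : Type}

theorem precedes_iff_pair_sublist {t : List (Event T PS Op Val)} {a b : Event T PS Op Val} :
    precedes t a b ↔ [a, b] <+ t := by
  rw [cons_sublist_iff]
  simp only [singleton_sublist]
  constructor
  · rintro ⟨i, j, hij, hi, hj⟩
    refine ⟨t.take j, t.drop j, (take_append_drop j t).symm, ?_, ?_⟩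
    · exact mem_of_getElem? (by rwa [getElem?_take_of_lt hij])
    · exact mem_of_getElem? (i := 0) (by rwa [getElem?_drop, add_zero])
  · rintro ⟨r₁, r₂, rfl, ha, hb⟩
    obtain ⟨i, hi, rfl⟩ := getElem_of_mem ha
    obtain ⟨k, hk, rfl⟩ := getElem_of_mem hb
    refine ⟨i, r₁.length + k, by omega, ?_, ?_⟩
    · simp [getElem?_append_left hi]
    · simp [getElem?_append_right]

theorem precedes_append_of_precedes_append_cons {t₁ t₂ : List (Event T PS Op Val)}
    {x a b : Event T PS Op Val} (h : precedes (t₁ ++ x :: t₂) a b) (ha : a ≠ x) (hb : b ≠ x) :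
    precedes (t₁ ++ t₂) a b := by
  rw [precedes_iff_pair_sublist] at h ⊢
  exact sublist_append_of_sublist_append_cons h (by simp [ha.symm, hb.symm])

theorem Allows.mem_of_rel {R : Event T PS Op Val → Event T PS Op Val → Prop}
    {t : List (Event T PS Op Val)} {a b : Event T PS Op Val} (h : Allows R t) (hab : R a b)
    (hb : b ∈ t) : a ∈ t :=
  (precedes_iff_pair_sublist.mp (h a b hab hb)).subset mem_cons_self

theorem Allows.not_rel_inv_of_res_notMem {R : Event T PS Op Val → Event T PS Op Val → Prop}
    (hAx : ∀ (a : Op) (inp out : Val) (e : Event T PS Op Val),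
      e ≠ effO a out → (R (inv a inp) e ↔ R (res a out) e))
    {t : List (Event T PS Op Val)} (h : Allows R t) {c : Op} {inp out : Val}
    (hres : res c out ∉ t) {b : Event T PS Op Val} (hb : b ∈ t) (hbe : b ≠ effO c out) :
    ¬ R (inv c inp) b :=
  fun hcb => hres (h.mem_of_rel ((hAx c inp out b hbe).mp hcb) hb)

end Event

theorem stmt3_general {T PS Op Val : Type}
    (R : Event T PS Op Val → Event T PS Op Val → Prop)
    (hAx : ∀ (a : Op) (inp out : Val) (e : Event T PS Op Val),
      e ≠ Event.effO a out → (R (Event.inv a inp) e ↔ R (Event.res a out) e))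
    (t₁ t₂ : List (Event T PS Op Val)) (c : Op) (cin : Val)
    (hnd : (t₁ ++ Event.inv c cin :: t₂).Nodup)
    (hpend : ∀ out : Val, Event.res c out ∉ t₁ ++ t₂ ∧ Event.effO c out ∉ t₁ ++ t₂)
    (hall : Event.Allows R (t₁ ++ Event.inv c cin :: t₂)) :
    Event.Allows R (t₁ ++ t₂) := by
  intro a b hab hb
  have hinv : Event.inv c cin ∉ t₁ ++ t₂ := (List.nodup_cons.mp (List.nodup_middle.mp hnd)).1
  have hb' : b ∈ t₁ ++ Event.inv c cin :: t₂ :=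
    ((List.sublist_cons_self _ t₂).append_left t₁).subset hb
  have hres : Event.res c cin ∉ t₁ ++ Event.inv c cin :: t₂ := by simpa using (hpend cin).1
  have ha : a ≠ Event.inv c cin := by
    rintro rfl
    exact hall.not_rel_inv_of_res_notMem hAx hres hb' (fun h => (hpend cin).2 (h ▸ hb)) hab
  exact Event.precedes_append_of_precedes_append_cons (hall a b hab hb') ha
    (fun h => hinv (h ▸ hb))

/-- Removing a pending invocation (one with no matching response or
effect) from a trace allowed by `R` yields a trace allowed by `R`, under the axiom
relating enforced orderings of invocations and responses. -/
theorem stmt3 {T PS Op Val : Type}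
    (R : Event T PS Op Val → Event T PS Op Val → Prop)
    (hAx : ∀ (a : Op) (inp out : Val) (e : Event T PS Op Val),
      e ≠ Event.effO a out → (R (Event.inv a inp) e ↔ R (Event.res a out) e))
    (t₁ t₂ : List (Event T PS Op Val)) (c : Op) (cin : Val)
    (hnd : (t₁ ++ Event.inv c cin :: t₂).Nodup)
    (hwf : Event.WellFormed (t₁ ++ Event.inv c cin :: t₂))
    (hpend : ∀ out : Val, Event.res c out ∉ t₁ ++ t₂ ∧ Event.effO c out ∉ t₁ ++ t₂)
    (hall : Event.Allows R (t₁ ++ Event.inv c cin :: t₂)) :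
    Event.Allows R (t₁ ++ t₂) :=
  stmt3_general R hAx t₁ t₂ c cin hnd hpend hall
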